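/- The map μ₂* of the osp(1|2)* example (μ₂*(X̂₊, ĥ) = 2ĥ, μ₂*(X̂₊, X̂₋) = 2X̂₋, μ₂*(X̂₊, v̂_±) = v̂_±, μ₂*(v̂₊, v̂₊) = 4ĥ, μ₂*(v̂₊, v̂₋) = 4X̂₋, extended by graded antisymmetry, all other brackets zero) itself satisfies the graded Jacobi identity, i.e. defines a Lie superalgebra structure on span(ĥ, X̂₊, X̂₋; v̂₊, v̂₋) with ĥ, X̂₊, X̂₋ even and v̂₊, v̂₋ odd. -/
import Mathlib


/- STATEMENT 9: the map μ₂* of the osp(1|2)* example (even basis ĥ, X̂₊, X̂₋ =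
indices 0,1,2; odd basis v̂₊, v̂₋ = indices 3,4), extended by graded antisymmetry
and bilinearity, itself satisfies the graded Jacobi identity
(-1)^{|a||c|}[a,[b,c]] + (-1)^{|b||a|}[b,[c,a]] + (-1)^{|c||b|}[c,[a,b]] = 0,
i.e. defines a Lie superalgebra structure on span(ĥ, X̂₊, X̂₋; v̂₊, v̂₋). -/

noncomputable section

abbrev V := Fin 5 → ℚ

noncomputable def e (i : Fin 5) : V := Pi.single i 1

/-- parity: 0 for the even basis elements, 1 for the odd ones -/
def par (i : Fin 5) : ℕ := if (i : ℕ) < 3 then 0 else 1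

/-- (-1)^{|i||j|} -/
noncomputable def sgn (i j : Fin 5) : ℚ := (-1 : ℚ) ^ (par i * par j)

/-- structure constants of μ₂*: μ₂*(X̂₊,ĥ) = 2ĥ, μ₂*(X̂₊,X̂₋) = 2X̂₋,
μ₂*(X̂₊,v̂_±) = v̂_±, μ₂*(v̂₊,v̂₊) = 4ĥ, μ₂*(v̂₊,v̂₋) = 4X̂₋,
extended by graded antisymmetry, all other brackets zero -/
noncomputable def mu2 : Fin 5 → Fin 5 → V :=
  ![![0, (-2 : ℚ) • e 0, 0, 0, 0],
    ![(2 : ℚ) • e 0, 0, (2 : ℚ) • e 2, e 3, e 4],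
    ![0, (-2 : ℚ) • e 2, 0, 0, 0],
    ![0, -(e 3), 0, (4 : ℚ) • e 0, (4 : ℚ) • e 2],
    ![0, -(e 4), 0, (4 : ℚ) • e 2, 0]]

/-- bilinear extension -/
noncomputable def br (μ : Fin 5 → Fin 5 → V) (u v : V) : V :=
  ∑ i : Fin 5, ∑ j : Fin 5, (u i * v j) • μ i j


lemma e_apply (i x : Fin 5) : e i x = if i = x then 1 else 0 := by
  simp [e, Pi.single_apply, eq_comm]

lemma br_ee (i j : Fin 5) : br mu2 (e i) (e j) = mu2 i j := by
  unfold br; simp [Fin.sum_univ_five, e_apply]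

lemma br_zero_right (μ : Fin 5 → Fin 5 → V) (u : V) : br μ u 0 = 0 := by
  simp [br]

lemma br_smul_right (μ : Fin 5 → Fin 5 → V) (u v : V) (c : ℚ) :
    br μ u (c • v) = c • br μ u v := by
  simp only [br, Pi.smul_apply, smul_eq_mul, Finset.smul_sum, smul_smul]
  refine Finset.sum_congr rfl fun i _ => Finset.sum_congr rfl fun j _ => ?_
  ring_nf

lemma br_neg_right (μ : Fin 5 → Fin 5 → V) (u v : V) : br μ u (-v) = -br μ u v := by
  simpa using br_smul_right μ u v (-1)

lemma mu2_eq (i j : Fin 5) : mu2 i j =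
  (![![0, (-2 : ℚ) • e 0, 0, 0, 0],
    ![(2 : ℚ) • e 0, 0, (2 : ℚ) • e 2, e 3, e 4],
    ![0, (-2 : ℚ) • e 2, 0, 0, 0],
    ![0, -(e 3), 0, (4 : ℚ) • e 0, (4 : ℚ) • e 2],
    ![0, -(e 4), 0, (4 : ℚ) • e 2, 0]] : Fin 5 → Fin 5 → V) i j := rfl

set_option maxHeartbeats 4000000 in
theorem mu2_is_Lie_superalgebra :
    -- graded antisymmetry
    (∀ i j : Fin 5, mu2 i j = -(sgn i j • mu2 j i)) ∧
    -- graded Jacobi identity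
    (∀ i j k : Fin 5,
      sgn i k • br mu2 (e i) (br mu2 (e j) (e k)) +
      sgn j i • br mu2 (e j) (br mu2 (e k) (e i)) +
      sgn k j • br mu2 (e k) (br mu2 (e i) (e j)) = 0) := by
  constructor
  · intro i j
    fin_cases i <;> fin_cases j <;> (funext x; fin_cases x) <;>
      simp [mu2, sgn, par, e, Pi.single_apply, Matrix.vecHead, Matrix.vecTail]
  · intro i j k
    rw [br_ee, br_ee, br_ee]
    fin_cases i <;> fin_cases j <;> fin_cases k <;>
      simp [mu2_eq, Matrix.vecHead, Matrix.vecTail, br_smul_right, br_neg_right,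
        br_zero_right, br_ee, sgn, par] <;>
      module
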